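/- arXiv:2208.09671 — 5 statements merged into one kernel-verified Lean document; each statement's English description precedes it below -/
import Mathlib

section
/- Let J be a join over attributes ALL, B_S ⊆ ALL nonempty, and D the two-tuple database built from tuples t1 (value 1 on B_S, 0 elsewhere) and t2 (all 0) by projection onto each relation's schema. For any subjoin J' of J, let J'_p be the partial join obtained by restricting every schema of J' to B_S (dropping empty schemas), and D_E the corresponding restriction of D. Then a tuple t over the attributes of J'_p is in J'_p(D_E) if and only if the tuple extending t with value 0 on all remaining attributes of J' is in J'(D). -/
/-- A tuple `t` agrees with tuple `u` on the attribute set `S`. -/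
def Agrees {α V : Type} (S : Set α) (t u : α → V) : Prop := ∀ a ∈ S, t a = u a

/-- The output of the natural join of the relations `R i` with schemas `sch i`. -/
def JoinOut {ι α V : Type} (sch : ι → Set α) (R : ι → Set (α → V)) : Set (α → V) :=
  { t | ∀ i, ∃ u ∈ R i, Agrees (sch i) t u }

/-- The output of the join of the subfamily of relations indexed by `K`. -/
def SubJoinOut {ι α V : Type} (sch : ι → Set α) (R : ι → Set (α → V)) (K : Set ι) :
    Set (α → V) :=
  { t | ∀ i ∈ K, ∃ u ∈ R i, Agrees (sch i) t u }

/-- A database is fully reduced if every tuple of every relation is the projection of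
some tuple in the full join output. -/
def FullyReduced {ι α V : Type} (sch : ι → Set α) (R : ι → Set (α → V)) : Prop :=
  ∀ i, ∀ u ∈ R i, ∃ t ∈ JoinOut sch R, Agrees (sch i) t u

/-- The boundary attributes of the subjoin indexed by `K`: attributes occurring both in
some relation of the subjoin and in some relation outside it. -/
def Boundary {ι α : Type} (sch : ι → Set α) (K : Set ι) : Set α :=
  (⋃ i ∈ K, sch i) ∩ (⋃ i ∈ Kᶜ, sch i)

/-- `G` is a join tree (parse tree) of the join with relation schemas `sch`. -/
def IsJoinTree {ι α : Type} (G : SimpleGraph ι) (sch : ι → Set α) : Prop :=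
  G.IsTree ∧ ∀ a : α, ∀ i j : ι, a ∈ sch i → a ∈ sch j →
    ∃ p : G.Walk i j, ∀ k ∈ p.support, a ∈ sch k

/-- The node set `K` induces a connected subtree of `G`. -/
def ConnectedIn {ι : Type} (G : SimpleGraph ι) (K : Set ι) : Prop :=
  ∀ i ∈ K, ∀ j ∈ K, ∃ p : G.Walk i j, ∀ k ∈ p.support, k ∈ K

namespace Agrees

variable {α V : Type} {S : Set α} {t u v : α → V}

theorem trans (htu : Agrees S t u) (huv : Agrees S u v) : Agrees S t v :=
  fun a ha => (htu a ha).trans (huv a ha)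

theorem exists_mem_projection_pair_iff {w : α → V} :
    (∃ u ∈ {u | Agrees S u v ∨ Agrees S u w}, Agrees S t u) ↔ Agrees S t v ∨ Agrees S t w := by
  constructor
  · rintro ⟨u, hu | hu, htu⟩
    · exact .inl (htu.trans hu)
    · exact .inr (htu.trans hu)
  · rintro (htv | htw)
    · exact ⟨v, .inl fun _ _ => rfl, htv⟩
    · exact ⟨w, .inr fun _ _ => rfl, htw⟩

theorem extend_const_iff {B : Set α} [DecidablePred (· ∈ B)] {c : V}
    (hv : ∀ a ∉ B, v a = c) :
    Agrees S (fun a => if a ∈ B then t a else c) v ↔ Agrees (S ∩ B) t v := by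
  constructor
  · intro h a ⟨haS, haB⟩
    simpa [haB] using h a haS
  · intro h a haS
    by_cases haB : a ∈ B
    · simpa [haB] using h a ⟨haS, haB⟩
    · simp [haB, hv a haB]

end Agrees

open Classical in
theorem stmt8_general {ι α : Type} (sch : ι → Set α) (BS : Set α)
    (t1 t2 : α → Bool)
    (ht1 : ∀ a, t1 a = true ↔ a ∈ BS)
    (ht2 : ∀ a, t2 a = false)
    (R : ι → Set (α → Bool))
    (hR : ∀ i, R i = {u | Agrees (sch i) u t1 ∨ Agrees (sch i) u t2})
    (Rp : ι → Set (α → Bool))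
    (hRp : ∀ i, Rp i = {u | Agrees (sch i ∩ BS) u t1 ∨ Agrees (sch i ∩ BS) u t2}) :
    ∀ t : α → Bool,
      t ∈ JoinOut (fun i => sch i ∩ BS) Rp ↔
        (fun a => if a ∈ BS then t a else false) ∈ JoinOut sch R := by
  intro t
  have ht1_off : ∀ a ∉ BS, t1 a = false := fun a ha => by simpa [ha] using ht1 a
  refine forall_congr' fun i => ?_
  rw [hR, hRp, Agrees.exists_mem_projection_pair_iff, Agrees.exists_mem_projection_pair_iff,
    Agrees.extend_const_iff ht1_off, Agrees.extend_const_iff fun a _ => ht2 a]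

open Classical in
/-- Partial join lemma: with the two-tuple database `R` built from `t1` (true exactly
on `BS`) and `t2` (all false), and its restriction `Rp` to the partial schemas
`sch i ∩ BS`, a tuple `t` is in the partial join iff the tuple obtained from `t` by
setting all attributes outside `BS` to `false` (i.e. to the common value of `t1` and
`t2` there) is in the full join of the subjoin's relations. -/
theorem stmt8 {ι α : Type} (sch : ι → Set α) (BS : Set α) (hBS : BS.Nonempty)
    (t1 t2 : α → Bool)
    (ht1 : ∀ a, t1 a = true ↔ a ∈ BS)
    (ht2 : ∀ a, t2 a = false)
    (R : ι → Set (α → Bool))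
    (hR : ∀ i, R i = {u | Agrees (sch i) u t1 ∨ Agrees (sch i) u t2})
    (Rp : ι → Set (α → Bool))
    (hRp : ∀ i, Rp i = {u | Agrees (sch i ∩ BS) u t1 ∨ Agrees (sch i ∩ BS) u t2}) :
    ∀ t : α → Bool,
      t ∈ JoinOut (fun i => sch i ∩ BS) Rp ↔
        (fun a => if a ∈ BS then t a else false) ∈ JoinOut sch R :=
  stmt8_general sch BS t1 t2 ht1 ht2 R hR Rp hRp
end

section
/- Let H be a hypergraph whose edges are all subsets of a set B_S of attributes, and suppose the edge set of H is partitioned into two nonempty parts H1 and H2 whose attribute sets are disjoint, while the full family of edges of a larger hypergraph E ⊇ H is connected and covers B_S. Populate each edge's relation with the two tuples all-0 and all-1 (restricted to its schema). Then the join of the relations of E outputs exactly the two constant tuples (all-0 and all-1 over B_S), while the join of the relations of H outputs, in addition, mixed tuples that are 1 on the attributes of H1 and 0 on the attributes of H2; consequently the join of H produces a tuple dangling with respect to the join of the edges of E not in H. -/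
section ConstantRelations

variable {ι α V : Type} {sch : ι → Set α}

/-- For `V = Bool` this is the relation {all-0, all-1} on schema `s`. -/
def constRel (s : Set α) : Set (α → V) := {u | ∃ v, ∀ a ∈ s, u a = v}

theorem exists_agrees_constRel_iff {s : Set α} {t : α → V} :
    (∃ u ∈ constRel s, Agrees s t u) ↔ t ∈ constRel s := by
  constructor
  · rintro ⟨u, ⟨v, hv⟩, hag⟩
    exact ⟨v, fun a ha => (hag a ha).trans (hv a ha)⟩
  · exact fun ht => ⟨t, ht, fun _ _ => rfl⟩

theorem mem_joinOut_constRel_iff {t : α → V} :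
    t ∈ JoinOut sch (fun i => constRel (sch i)) ↔ ∀ i, t ∈ constRel (sch i) :=
  forall_congr' fun _ => exists_agrees_constRel_iff

theorem mem_subJoinOut_constRel_iff {K : Set ι} {t : α → V} :
    t ∈ SubJoinOut sch (fun i => constRel (sch i)) K ↔ ∀ i ∈ K, t ∈ constRel (sch i) :=
  forall₂_congr fun _ _ => exists_agrees_constRel_iff

theorem forall_eq_of_reflTransGen {t : α → V} (ht : ∀ i, t ∈ constRel (sch i)) {i j : ι}
    (hij : Relation.ReflTransGen (fun x y => (sch x ∩ sch y).Nonempty) i j) {v : V}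
    (hv : ∀ a ∈ sch i, t a = v) : ∀ a ∈ sch j, t a = v := by
  induction hij with
  | refl => exact hv
  | @tail x y _ hxy ih =>
    obtain ⟨c, hcx, hcy⟩ := hxy
    obtain ⟨w, hw⟩ := ht y
    intro a ha
    rw [hw a ha, ← hw c hcy, ih c hcx]

theorem joinOut_constRel_eq [Nonempty ι] {BS : Set α} (hsub : ∀ i, sch i ⊆ BS)
    (hcov : BS ⊆ ⋃ i, sch i)
    (hconn : ∀ i j : ι, Relation.ReflTransGen (fun x y => (sch x ∩ sch y).Nonempty) i j) :
    JoinOut sch (fun i => constRel (sch i)) = (constRel BS : Set (α → V)) := by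
  ext t
  rw [mem_joinOut_constRel_iff]
  constructor
  · intro ht
    let i₀ : ι := Classical.arbitrary ι
    obtain ⟨v, hv⟩ := ht i₀
    refine ⟨v, fun a ha => ?_⟩
    obtain ⟨j, hj⟩ := Set.mem_iUnion.mp (hcov ha)
    exact forall_eq_of_reflTransGen ht (hconn i₀ j) hv a hj
  · rintro ⟨v, hv⟩ i
    exact ⟨v, fun a ha => hv a (hsub i ha)⟩

open Classical in
theorem piecewise_mem_subJoinOut_constRel {K₁ K₂ : Set ι}
    (hdisj : Disjoint (⋃ i ∈ K₁, sch i) (⋃ i ∈ K₂, sch i)) (v₁ v₂ : V) :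
    (⋃ i ∈ K₁, sch i).piecewise (fun _ => v₁) (fun _ => v₂) ∈
      SubJoinOut sch (fun i => constRel (sch i)) (K₁ ∪ K₂) := by
  rw [mem_subJoinOut_constRel_iff]
  rintro i (hi | hi)
  · exact ⟨v₁, fun a ha => Set.piecewise_eq_of_mem _ _ _ (Set.mem_biUnion hi ha)⟩
  · exact ⟨v₂, fun a ha => Set.piecewise_eq_of_notMem _ _ _
      (hdisj.notMem_of_mem_right (Set.mem_biUnion hi ha))⟩

end ConstantRelations

open Classical in
theorem piecewise_mem_joinOut {ι α V : Type} {sch : ι → Set α} {R : ι → Set (α → V)}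
    {K : Set ι} {t t' : α → V} (ht : t ∈ SubJoinOut sch R K)
    (ht' : t' ∈ SubJoinOut sch R Kᶜ) (hag : Agrees (Boundary sch K) t t') :
    (⋃ i ∈ K, sch i).piecewise t t' ∈ JoinOut sch R := by
  intro i
  by_cases hi : i ∈ K
  · obtain ⟨u, hu, htu⟩ := ht i hi
    exact ⟨u, hu, fun a ha => by
      rw [Set.piecewise_eq_of_mem _ _ _ (Set.mem_biUnion hi ha), htu a ha]⟩
  · obtain ⟨u, hu, htu⟩ := ht' i hi
    refine ⟨u, hu, fun a ha => ?_⟩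
    by_cases haK : a ∈ ⋃ i ∈ K, sch i
    · rw [Set.piecewise_eq_of_mem _ _ _ haK, hag a ⟨haK, Set.mem_biUnion hi ha⟩, htu a ha]
    · rw [Set.piecewise_eq_of_notMem _ _ _ haK, htu a ha]

theorem mem_constRel_of_agrees_boundary {ι α V : Type} [Nonempty ι] {sch : ι → Set α}
    {BS : Set α} (hsub : ∀ i, sch i ⊆ BS) (hcov : BS ⊆ ⋃ i, sch i)
    (hconn : ∀ i j : ι, Relation.ReflTransGen (fun x y => (sch x ∩ sch y).Nonempty) i j)
    {K : Set ι} {t t' : α → V} (ht : t ∈ SubJoinOut sch (fun i => constRel (sch i)) K)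
    (ht' : t' ∈ SubJoinOut sch (fun i => constRel (sch i)) Kᶜ)
    (hag : Agrees (Boundary sch K) t t') : t ∈ constRel (⋃ i ∈ K, sch i) := by
  classical
  have hglue := piecewise_mem_joinOut ht ht' hag
  rw [joinOut_constRel_eq hsub hcov hconn] at hglue
  obtain ⟨v, hv⟩ := hglue
  refine ⟨v, fun a ha => ?_⟩
  obtain ⟨i, -, hai⟩ := Set.mem_iUnion₂.mp ha
  rw [← hv a (hsub i hai), Set.piecewise_eq_of_mem _ _ _ ha]

open Classical in
/-- Hypergraph `E` (all indices) is connected and its edges cover `BS`; the subfamily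
`K` (the edges of `H`) is partitioned into nonempty parts `K1`, `K2` with disjoint
attribute sets; each edge carries the two constant tuples all-`false` and all-`true`.
Then the full join outputs exactly the two tuples constant on `BS`; the join of `H`
additionally contains the mixed tuple that is `true` on the attributes of `K1` and
`false` on those of `K2`; and that mixed tuple is dangling with respect to the join
of the edges not in `H`. -/
theorem stmt9 {ι α : Type} (sch : ι → Set α) (BS : Set α)
    (hne : ∀ i, (sch i).Nonempty)
    (hsub : ∀ i, sch i ⊆ BS)
    (hcov : BS ⊆ ⋃ i, sch i)
    (hconn : ∀ i j : ι, Relation.ReflTransGen (fun x y => (sch x ∩ sch y).Nonempty) i j)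
    (K K1 K2 : Set ι) (hK : K = K1 ∪ K2) (h1 : K1.Nonempty) (h2 : K2.Nonempty)
    (hdisj : (⋃ i ∈ K1, sch i) ∩ (⋃ i ∈ K2, sch i) = ∅)
    (R : ι → Set (α → Bool))
    (hR : ∀ i, R i = {u | (∀ a ∈ sch i, u a = false) ∨ (∀ a ∈ sch i, u a = true)}) :
    (∀ t, t ∈ JoinOut sch R ↔
        ((∀ a ∈ BS, t a = false) ∨ (∀ a ∈ BS, t a = true))) ∧
    (fun a => if a ∈ ⋃ i ∈ K1, sch i then true else false) ∈ SubJoinOut sch R K ∧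
    (∀ t' ∈ SubJoinOut sch R Kᶜ,
      ¬ Agrees (Boundary sch K)
          (fun a => if a ∈ ⋃ i ∈ K1, sch i then true else false) t') := by
  obtain rfl : R = fun i => constRel (sch i) := funext fun i => (hR i).trans <|
    Set.ext fun u => (Bool.exists_bool (p := fun v => ∀ a ∈ sch i, u a = v)).symm
  obtain ⟨i₁, hi₁⟩ := h1
  obtain ⟨i₂, hi₂⟩ := h2
  have : Nonempty ι := ⟨i₁⟩
  have hdisj' := Set.disjoint_iff_inter_eq_empty.mpr hdisj
  have hmixed := hK ▸ piecewise_mem_subJoinOut_constRel hdisj' true false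
  refine ⟨fun t => ?_, hmixed, fun t' ht' hag => ?_⟩
  · rw [joinOut_constRel_eq hsub hcov hconn]
    exact Bool.exists_bool
  · obtain ⟨v, hv⟩ := mem_constRel_of_agrees_boundary hsub hcov hconn hmixed ht' hag
    obtain ⟨a₁, ha₁⟩ := hne i₁
    obtain ⟨a₂, ha₂⟩ := hne i₂
    have hval₁ := hv a₁ (Set.mem_biUnion (hK ▸ Or.inl hi₁) ha₁)
    have hval₂ := hv a₂ (Set.mem_biUnion (hK ▸ Or.inr hi₂) ha₂)
    rw [Set.piecewise_eq_of_mem _ _ _ (Set.mem_biUnion hi₁ ha₁)] at hval₁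
    rw [Set.piecewise_eq_of_notMem _ _ _
      (hdisj'.notMem_of_mem_right (Set.mem_biUnion hi₂ ha₂))] at hval₂
    exact Bool.noConfusion (hval₁.trans hval₂.symm)
end

section
/- Let J be an acyclic join with join tree T, and let J_S be a subjoin such that some relation r of J not in J_S has no associated relation: no relation r' in J_S contains all attributes of r that occur in at least one relation of J_S. Then J_S is not safe: there exists a fully reduced database D such that the output of J_S on D contains a tuple that agrees on the boundary attributes with no tuple of the output of the complement subjoin J_S^c on D. -/
/-!
Let `B` be the attributes of `r` that occur in the subjoin, and fix values `x ≠ y`. Let every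
relation consist of the tuples `t_b` (`b ∈ B`) that take the value `y` on `B \ {b}` and `x`
elsewhere; a database whose relations all coincide is fully reduced. Since no relation of the
subjoin contains all of `B`, each of them misses some `b ∈ B`, and on its schema the tuple that
is `y` on all of `B` agrees with `t_b`, so that tuple is in the subjoin output. A tuple of the
complement output agrees with some `t_b` on the schema of `r`, so it takes the value `x` at `b`,
a boundary attribute where the former tuple is `y`.
-/

section MarkTuple

variable {α V : Type}

open Classical in
noncomputable def markTuple (B : Set α) (x y : V) : α → V :=
  fun a => if a ∈ B then y else x

theorem markTuple_of_mem {B : Set α} {a : α} (x y : V) (h : a ∈ B) : markTuple B x y a = y :=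
  if_pos h

theorem markTuple_of_notMem {B : Set α} {a : α} (x y : V) (h : a ∉ B) : markTuple B x y a = x :=
  if_neg h

theorem agrees_markTuple {S B B' : Set α} (x y : V) (h : ∀ a ∈ S, (a ∈ B ↔ a ∈ B')) :
    Agrees S (markTuple B x y) (markTuple B' x y) := by
  intro a ha
  by_cases haB : a ∈ B
  · rw [markTuple_of_mem x y haB, markTuple_of_mem x y ((h a ha).mp haB)]
  · rw [markTuple_of_notMem x y haB, markTuple_of_notMem x y (mt (h a ha).mpr haB)]

end MarkTuple

theorem fullyReduced_const {ι α V : Type} (sch : ι → Set α) (S : Set (α → V)) :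
    FullyReduced sch (fun _ => S) :=
  fun _ u hu => ⟨u, fun _ => ⟨u, hu, fun _ _ => rfl⟩, fun _ _ => rfl⟩

section MissingOne

variable {ι α V : Type} (sch : ι → Set α) (B : Set α) (x y : V)

def missingOneTuples : Set (α → V) :=
  (fun b => markTuple (B \ {b}) x y) '' B

theorem markTuple_mem_subJoinOut {K : Set ι} (hK : ∀ i ∈ K, ¬ B ⊆ sch i) :
    markTuple B x y ∈ SubJoinOut sch (fun _ => missingOneTuples B x y) K := by
  intro i hi
  obtain ⟨b, hbB, hbi⟩ := Set.not_subset.mp (hK i hi)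
  refine ⟨_, Set.mem_image_of_mem _ hbB, agrees_markTuple x y fun a ha => ?_⟩
  have hab : a ≠ b := fun h => hbi (h ▸ ha)
  simp [hab]

theorem exists_apply_eq_of_mem_subJoinOut {K : Set ι} {r : ι} {t : α → V}
    (ht : t ∈ SubJoinOut sch (fun _ => missingOneTuples B x y) K) (hr : r ∈ K)
    (hB : B ⊆ sch r) : ∃ b ∈ B, t b = x := by
  obtain ⟨u, ⟨b, hbB, rfl⟩, hagr⟩ := ht r hr
  exact ⟨b, hbB, (hagr b (hB hbB)).trans (markTuple_of_notMem x y fun h => h.2 rfl)⟩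

end MissingOne

theorem stmt12_general {ι α V : Type} [Infinite V]
    (sch : ι → Set α) (K : Set ι)
    (r : ι) (hr : r ∉ K)
    (hnoassoc : ¬ ∃ r' ∈ K, (sch r ∩ ⋃ i ∈ K, sch i) ⊆ sch r') :
    ∃ R : ι → Set (α → V), FullyReduced sch R ∧
      ∃ tt ∈ SubJoinOut sch R K, ∀ t' ∈ SubJoinOut sch R Kᶜ,
        ¬ Agrees (Boundary sch K) tt t' := by
  obtain ⟨x, y, hxy⟩ := exists_pair_ne V
  set B := sch r ∩ ⋃ i ∈ K, sch i
  have hB : ∀ i ∈ K, ¬ B ⊆ sch i := fun i hi h => hnoassoc ⟨i, hi, h⟩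
  refine ⟨fun _ => missingOneTuples B x y, fullyReduced_const sch _, markTuple B x y,
    markTuple_mem_subJoinOut sch B x y hB, fun t' ht' hagree => ?_⟩
  obtain ⟨b, hbB, htb⟩ :=
    exists_apply_eq_of_mem_subJoinOut sch B x y ht' (Set.mem_compl hr) Set.inter_subset_left
  have hb : markTuple B x y b = t' b := hagree b ⟨hbB.2, Set.mem_biUnion hr hbB.1⟩
  rw [markTuple_of_mem x y hbB, htb] at hb
  exact hxy hb.symm

/-- If some external relation `r` (not in the subjoin `K`) has no associated relation
in `K` (no relation of the subjoin contains all the subjoin attributes of `r`), then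
the subjoin is not safe: there is a fully reduced database on which the subjoin
output contains a tuple agreeing on the boundary attributes with no tuple of the
complement subjoin's output. -/
theorem stmt12 {ι α V : Type} [Fintype ι] [Infinite V]
    (G : SimpleGraph ι) (sch : ι → Set α) (hschfin : ∀ i, (sch i).Finite)
    (hJT : IsJoinTree G sch) (K : Set ι)
    (r : ι) (hr : r ∉ K)
    (hnoassoc : ¬ ∃ r' ∈ K, (sch r ∩ ⋃ i ∈ K, sch i) ⊆ sch r') :
    ∃ R : ι → Set (α → V), FullyReduced sch R ∧
      ∃ tt ∈ SubJoinOut sch R K, ∀ t' ∈ SubJoinOut sch R Kᶜ,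
        ¬ Agrees (Boundary sch K) tt t' :=
  stmt12_general sch K r hr hnoassoc
end

section
/- Suppose the subjoin J_S of acyclic join J consists of exactly two maximal subtrees T1 and T2 in a join tree T, let p be the tree path between their roots, let S be the set of attributes common to the roots of T1 and T2, and suppose p has a break: two consecutive nodes u', u on p (u' closer to T1's root, u the parent of u') with (u ∖ S) ∩ (u' ∖ S) = ∅. Then there exists a join tree T' of J in which the relations of J_S form a single connected subtree; concretely, T' is obtained from T by the reverse path transformation along the segment of p from u' down to the root of T1, followed by reattaching the root of T1 as a child of the root of T2. -/
open SimpleGraph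

/-- If `p.append q` is a path, a vertex in both `p.support` and `q.support` is the junction. -/
lemma junction_eq {V : Type} {G : SimpleGraph V} {a b c : V} {p : G.Walk a b}
    {q : G.Walk b c} (h : (p.append q).IsPath) {x : V}
    (hxp : x ∈ p.support) (hxq : x ∈ q.support) : x = b := by
  by_contra hne
  have hnd : (p.support ++ q.support.tail).Nodup := by
    have := h.support_nodup
    rwa [Walk.support_append] at this
  have hxt : x ∈ q.support.tail := by
    rw [q.support_eq_cons] at hxq
    rcases List.mem_cons.mp hxq with h' | h'
    · exact absurd h' hne
    · exact h'
  exact (List.disjoint_of_nodup_append hnd) hxp hxt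

lemma walk_transfer_of_ne {V : Type} {G G' : SimpleGraph V} {e : Sym2 V}
    (hk : ∀ ed ∈ G.edgeSet, ed ≠ e → ed ∈ G'.edgeSet) {a b : V} (p : G.Walk a b)
    (hp : e ∉ p.edges) : ∃ q : G'.Walk a b, q.support = p.support :=
  ⟨p.transfer G' (fun ed hed => hk ed (p.edges_subset_edgeSet hed) (fun h => hp (h ▸ hed))),
    p.support_transfer _⟩

lemma split_walk {V : Type} {G : SimpleGraph V} {R1 R2 u u' : V} (w : G.Walk R1 R2)
    (hw : w.IsPath) (hne : u ≠ u') (hu : u ∈ w.support) (hu' : u' ∈ w.support) :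
    (∃ (pa : G.Walk R1 u) (pb : G.Walk u' R2),
       s(u,u') ∉ pa.edges ∧ s(u,u') ∉ pb.edges ∧
       (∀ k ∈ pa.support, k ∈ w.support) ∧ (∀ k ∈ pb.support, k ∈ w.support)) ∨
    (∃ (pa : G.Walk R1 u') (pb : G.Walk u R2),
       s(u,u') ∉ pa.edges ∧ s(u,u') ∉ pb.edges ∧
       (∀ k ∈ pa.support, k ∈ w.support) ∧ (∀ k ∈ pb.support, k ∈ w.support)) := by
  classical
  set w1 := w.takeUntil u hu with hw1
  set w2 := w.dropUntil u hu with hw2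
  have hsp : w1.append w2 = w := w.take_spec hu
  have hwp : (w1.append w2).IsPath := by rwa [hsp]
  have hu'' : u' ∈ w1.support ∨ u' ∈ w2.support :=
    (Walk.mem_support_append_iff w1 w2).mp (by rw [hsp]; exact hu')
  rcases hu'' with h1 | h2
  · right
    refine ⟨w1.takeUntil u' h1, w2, ?_, ?_, ?_, ?_⟩
    · intro he
      have hup : u ∈ (w1.takeUntil u' h1).support := Walk.fst_mem_support_of_mem_edges _ he
      have hw1p : ((w1.takeUntil u' h1).append (w1.dropUntil u' h1)).IsPath := by
        rw [Walk.take_spec]; exact hw.takeUntil hu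
      exact hne (junction_eq hw1p hup (Walk.end_mem_support _))
    · intro he
      have : u' ∈ w2.support := Walk.snd_mem_support_of_mem_edges _ he
      exact hne (junction_eq hwp h1 this).symm
    · exact fun k hk => Walk.support_takeUntil_subset w hu
        (Walk.support_takeUntil_subset w1 h1 hk)
    · exact fun k hk => Walk.support_dropUntil_subset w hu hk
  · left
    refine ⟨w1, w2.dropUntil u' h2, ?_, ?_, ?_, ?_⟩
    · intro he
      have : u' ∈ w1.support := Walk.snd_mem_support_of_mem_edges _ he
      exact hne (junction_eq hwp this h2).symm
    · intro he
      have hup : u ∈ (w2.dropUntil u' h2).support := Walk.fst_mem_support_of_mem_edges _ he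
      have hw2p : ((w2.takeUntil u' h2).append (w2.dropUntil u' h2)).IsPath := by
        rw [Walk.take_spec]; exact hw.dropUntil hu
      exact hne (junction_eq hw2p (Walk.start_mem_support _) hup)
    · exact fun k hk => Walk.support_takeUntil_subset w hu hk
    · exact fun k hk => Walk.support_dropUntil_subset w hu
        (Walk.support_dropUntil_subset w2 h2 hk)

/-- If the subjoin `K` consists of exactly two maximal subtrees `K1`, `K2` in a join
tree `G`, and the (unique) tree path `w` between nodes `R1` of `K1` and `R2` of `K2`
whose internal nodes are external has a break — two adjacent nodes `u`, `u'` on `w`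
sharing no attribute outside `S = sch R1 ∩ sch R2` — then there is a join tree of
the join in which the relations of the subjoin form a single connected subtree. -/
theorem stmt13 {ι α : Type} (G : SimpleGraph ι) (sch : ι → Set α)
    (hJT : IsJoinTree G sch) (K K1 K2 : Set ι)
    (hK : K = K1 ∪ K2) (h1 : K1.Nonempty) (h2 : K2.Nonempty) (hdisj : Disjoint K1 K2)
    (hc1 : ConnectedIn G K1) (hc2 : ConnectedIn G K2)
    (hm1 : ∀ C, K1 ⊆ C → C ⊆ K → ConnectedIn G C → C = K1)
    (hm2 : ∀ C, K2 ⊆ C → C ⊆ K → ConnectedIn G C → C = K2)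
    (R1 R2 : ι) (hR1 : R1 ∈ K1) (hR2 : R2 ∈ K2)
    (w : G.Walk R1 R2) (hw : w.IsPath)
    (hint : ∀ x ∈ w.support, x ≠ R1 → x ≠ R2 → x ∉ K)
    (u u' : ι) (hadj : G.Adj u u') (hu : u ∈ w.support) (hu' : u' ∈ w.support)
    (hbreak :
      (sch u \ (sch R1 ∩ sch R2)) ∩ (sch u' \ (sch R1 ∩ sch R2)) = ∅) :
    ∃ G' : SimpleGraph ι, IsJoinTree G' sch ∧ ConnectedIn G' K := by
  classical
  obtain ⟨hGtree, hattr⟩ := hJT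
  have hconn : G.Connected := hGtree.isConnected
  have hacyc : G.IsAcyclic := hGtree.IsAcyclic
  have hne_uu' : u ≠ u' := hadj.ne
  have hR12 : R1 ≠ R2 := by
    intro h
    exact (Set.disjoint_left.mp hdisj hR1) (h ▸ hR2)
  set e : Sym2 ι := s(u, u') with he_def
  set f : Sym2 ι := s(R1, R2) with hf_def
  set G' : SimpleGraph ι := SimpleGraph.fromEdgeSet ((G.edgeSet \ {e}) ∪ {f}) with hG'def
  have hG'adj : ∀ {x y : ι}, G'.Adj x y ↔ (s(x, y) ∈ (G.edgeSet \ {e}) ∪ {f}) ∧ x ≠ y :=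
    fun {x y} => SimpleGraph.fromEdgeSet_adj _
  have hfG' : G'.Adj R1 R2 := hG'adj.mpr ⟨Or.inr rfl, hR12⟩
  have hkeep : ∀ {x y : ι}, G.Adj x y → s(x, y) ≠ e → G'.Adj x y := by
    intro x y hxy hne
    exact hG'adj.mpr ⟨Or.inl ⟨hxy, hne⟩, hxy.ne⟩
  have hG'E : G'.edgeSet = (G.edgeSet \ {e}) ∪ {f} := by
    rw [hG'def, SimpleGraph.edgeSet_fromEdgeSet]
    ext ed
    simp only [Set.mem_diff, Set.mem_union, Set.mem_singleton_iff, Set.mem_setOf_eq]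
    constructor
    · rintro ⟨h, _⟩; exact h
    · rintro (⟨hh1, hh2⟩ | rfl)
      · exact ⟨Or.inl ⟨hh1, hh2⟩, G.not_isDiag_of_mem_edgeSet hh1⟩
      · exact ⟨Or.inr rfl, by simp [hf_def, Sym2.isDiag_iff_proj_eq, hR12]⟩
  have hkE : ∀ ed ∈ G.edgeSet, ed ≠ e → ed ∈ G'.edgeSet := by
    intro ed hed hne
    rw [hG'E]; exact Or.inl ⟨hed, hne⟩
  -- the two pieces of w around the edge e
  have hsplit := split_walk w hw hne_uu' hu hu'
  -- the detour walk u → u' in G' staying inside w.support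
  have hdetour : ∃ q : G'.Walk u u', ∀ k ∈ q.support, k ∈ w.support := by
    rcases hsplit with ⟨pa, pb, hea, heb, hsa, hsb⟩ | ⟨pa, pb, hea, heb, hsa, hsb⟩
    · obtain ⟨qa, hqa⟩ := walk_transfer_of_ne hkE pa hea
      obtain ⟨qb, hqb⟩ := walk_transfer_of_ne hkE pb heb
      refine ⟨qa.reverse.append ((Walk.cons hfG' Walk.nil).append qb.reverse), ?_⟩
      intro k hk
      rw [Walk.mem_support_append_iff] at hk
      rcases hk with hk | hk
      · rw [Walk.support_reverse, List.mem_reverse, hqa] at hk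
        exact hsa k hk
      · rw [Walk.mem_support_append_iff] at hk
        rcases hk with hk | hk
        · have : k = R1 ∨ k = R2 := by simpa using hk
          rcases this with rfl | rfl
          · exact w.start_mem_support
          · exact w.end_mem_support
        · rw [Walk.support_reverse, List.mem_reverse, hqb] at hk
          exact hsb k hk
    · obtain ⟨qa, hqa⟩ := walk_transfer_of_ne hkE pa hea
      obtain ⟨qb, hqb⟩ := walk_transfer_of_ne hkE pb heb
      refine ⟨qb.append ((Walk.cons hfG'.symm Walk.nil).append qa), ?_⟩
      intro k hk
      rw [Walk.mem_support_append_iff] at hk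
      rcases hk with hk | hk
      · rw [hqb] at hk
        exact hsb k hk
      · rw [Walk.mem_support_append_iff] at hk
        rcases hk with hk | hk
        · have : k = R2 ∨ k = R1 := by simpa using hk
          rcases this with rfl | rfl
          · exact w.end_mem_support
          · exact w.start_mem_support
        · rw [hqa] at hk
          exact hsa k hk
  -- deleting e from G disconnects R1 from R2
  have hbridge : ¬ (G \ SimpleGraph.fromEdgeSet {e}).Reachable u u' := by
    have hbr : G.IsBridge s(u, u') := isAcyclic_iff_forall_adj_isBridge.mp hacyc hadj
    exact SimpleGraph.isBridge_iff.mp hbr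
  have hnoreach : ¬ (G \ SimpleGraph.fromEdgeSet {e}).Reachable R1 R2 := by
    intro hr
    apply hbridge
    have hmk : ∀ {a b : ι} (p : G.Walk a b), e ∉ p.edges →
        (G \ SimpleGraph.fromEdgeSet {e}).Reachable a b := by
      intro a b p hp
      exact ⟨p.toDeleteEdges {e} (fun ed hed => by
        simp only [Set.mem_singleton_iff]
        intro hc; exact hp (hc ▸ hed))⟩
    rcases hsplit with ⟨pa, pb, hea, heb, _, _⟩ | ⟨pa, pb, hea, heb, _, _⟩
    · exact ((hmk pa hea).symm.trans hr).trans (hmk pb heb).symm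
    · exact ((hmk pb heb).trans hr.symm).trans (hmk pa hea)
  -- G' is connected
  have hreach' : ∀ {x y : ι}, G.Adj x y → G'.Reachable x y := by
    intro x y hxy
    by_cases hxe : s(x, y) = e
    · obtain ⟨q, _⟩ := hdetour
      rcases Sym2.eq_iff.mp hxe with ⟨rfl, rfl⟩ | ⟨rfl, rfl⟩
      · exact ⟨q⟩
      · exact ⟨q.reverse⟩
    · exact (hkeep hxy hxe).reachable
  have hG'conn : G'.Connected := by
    haveI : Nonempty ι := hconn.nonempty
    refine ⟨fun x y => ?_⟩
    obtain ⟨p⟩ := hconn.preconnected x y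
    induction p with
    | nil => exact SimpleGraph.Reachable.refl _
    | cons h p ih => exact (hreach' h).trans ih
  -- G' is acyclic
  have hG'acyc : G'.IsAcyclic := by
    intro v c hc
    by_cases hf : f ∈ c.edges
    · have hreach : (G' \ SimpleGraph.fromEdgeSet {s(R1, R2)}).Reachable R1 R2 :=
        ((SimpleGraph.adj_and_reachable_delete_edges_iff_exists_cycle (G := G')).mpr
          ⟨v, c, hc, hf⟩).2
      apply hnoreach
      refine hreach.mono ?_
      intro x y hxy
      rw [SimpleGraph.sdiff_adj] at hxy ⊢
      obtain ⟨hxy1, hxy2⟩ := hxy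
      rw [SimpleGraph.fromEdgeSet_adj] at hxy2
      rw [hG'adj] at hxy1
      obtain ⟨hmem, hnexy⟩ := hxy1
      rcases hmem with ⟨hgadj, hne_e⟩ | hfeq
      · refine ⟨G.mem_edgeSet.mp hgadj, ?_⟩
        rw [SimpleGraph.fromEdgeSet_adj]
        rintro ⟨hmem', -⟩
        exact hne_e hmem'
      · exact absurd ⟨hfeq, hnexy⟩ hxy2
    · have hsub : ∀ ed ∈ c.edges, ed ∈ G.edgeSet := by
        intro ed hed
        have := c.edges_subset_edgeSet hed
        rw [hG'E] at this
        rcases this with ⟨hg, _⟩ | hfe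
        · exact hg
        · exact absurd (hfe ▸ hed) hf
      exact hacyc (c.transfer G hsub) (hc.transfer hsub)
  -- transfer of connected-in sets from G to G'
  have htransC : ∀ A : Set ι,
      (u ∈ A → u' ∈ A → ∃ q : G'.Walk u u', ∀ k ∈ q.support, k ∈ A) →
      ConnectedIn G A → ConnectedIn G' A := by
    intro A hA hC i hi j hj
    obtain ⟨p, hp⟩ := hC i hi j hj
    clear hi hj
    induction p with
    | nil => exact ⟨Walk.nil, hp⟩
    | @cons x y _ h p ih =>
      have hx : x ∈ A := hp x (Walk.start_mem_support _)
      have hy : y ∈ A := hp y (by simp [Walk.support_cons])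
      obtain ⟨q, hq⟩ := ih (fun k hk => hp k (by rw [Walk.support_cons]; exact List.mem_cons_of_mem _ hk))
      by_cases hxe : s(x, y) = e
      · rcases Sym2.eq_iff.mp hxe with ⟨rfl, rfl⟩ | ⟨rfl, rfl⟩
        · obtain ⟨d, hd⟩ := hA hx hy
          refine ⟨d.append q, ?_⟩
          intro k hk
          rcases (Walk.mem_support_append_iff _ _).mp hk with hk | hk
          · exact hd k hk
          · exact hq k hk
        · obtain ⟨d, hd⟩ := hA hy hx
          refine ⟨d.reverse.append q, ?_⟩
          intro k hk
          rcases (Walk.mem_support_append_iff _ _).mp hk with hk | hk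
          · rw [Walk.support_reverse, List.mem_reverse] at hk
            exact hd k hk
          · exact hq k hk
      · refine ⟨Walk.cons (hkeep h hxe) q, ?_⟩
        intro k hk
        rw [Walk.support_cons] at hk
        rcases List.mem_cons.mp hk with rfl | hk
        · exact hx
        · exact hq k hk
  -- u and u' cannot both be in K1 (or both in K2)
  have honW : ∀ x ∈ w.support, x ∈ K → x = R1 ∨ x = R2 := by
    intro x hx hxK
    by_contra hcon
    push_neg at hcon
    exact hint x hx hcon.1 hcon.2 hxK
  have hnotK1 : ¬ (u ∈ K1 ∧ u' ∈ K1) := by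
    rintro ⟨huK, hu'K⟩
    have h1' : u = R1 := by
      rcases honW u hu (hK ▸ Or.inl huK) with h | h
      · exact h
      · exact absurd huK (by rw [h]; exact Set.disjoint_right.mp hdisj hR2)
    have h2' : u' = R1 := by
      rcases honW u' hu' (hK ▸ Or.inl hu'K) with h | h
      · exact h
      · exact absurd hu'K (by rw [h]; exact Set.disjoint_right.mp hdisj hR2)
    exact hne_uu' (h1'.trans h2'.symm)
  have hnotK2 : ¬ (u ∈ K2 ∧ u' ∈ K2) := by
    rintro ⟨huK, hu'K⟩
    have h1' : u = R2 := by
      rcases honW u hu (hK ▸ Or.inr huK) with h | h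
      · exact absurd huK (by rw [h]; exact Set.disjoint_left.mp hdisj hR1)
      · exact h
    have h2' : u' = R2 := by
      rcases honW u' hu' (hK ▸ Or.inr hu'K) with h | h
      · exact absurd hu'K (by rw [h]; exact Set.disjoint_left.mp hdisj hR1)
      · exact h
    exact hne_uu' (h1'.trans h2'.symm)
  have hK1' : ConnectedIn G' K1 :=
    htransC K1 (fun ha hb => absurd ⟨ha, hb⟩ hnotK1) hc1
  have hK2' : ConnectedIn G' K2 :=
    htransC K2 (fun ha hb => absurd ⟨ha, hb⟩ hnotK2) hc2
  -- attribute sets remain connected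
  have hVa : ∀ a : α, ConnectedIn G' {i | a ∈ sch i} := by
    intro a
    refine htransC _ ?_ (fun i hi j hj => hattr a i j hi hj)
    intro hua hu'a
    have haS : a ∈ sch R1 ∩ sch R2 := by
      by_contra hnS
      have : a ∈ (sch u \ (sch R1 ∩ sch R2)) ∩ (sch u' \ (sch R1 ∩ sch R2)) :=
        ⟨⟨hua, hnS⟩, ⟨hu'a, hnS⟩⟩
      rw [hbreak] at this
      exact this
    obtain ⟨p0, hp0⟩ := hattr a R1 R2 haS.1 haS.2
    have hwsub : ∀ k ∈ w.support, a ∈ sch k := by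
      have huniq := hGtree.existsUnique_path R1 R2
      obtain ⟨pu, _, hun⟩ := huniq
      have h1' : w = pu := hun w hw
      have h2' : p0.bypass = pu := hun p0.bypass p0.bypass_isPath
      intro k hk
      have : k ∈ p0.bypass.support := by rw [h2', ← h1']; exact hk
      exact hp0 k (p0.support_bypass_subset this)
    obtain ⟨q, hq⟩ := hdetour
    exact ⟨q, fun k hk => hwsub k (hq k hk)⟩
  -- conclusion
  refine ⟨G', ⟨⟨hG'conn, hG'acyc⟩, fun a i j hi hj => hVa a i hi j hj⟩, ?_⟩
  intro i hi j hj
  rw [hK] at hi hj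
  have hsubK1 : ∀ k, k ∈ K1 → k ∈ K := fun k hk => hK ▸ Or.inl hk
  have hsubK2 : ∀ k, k ∈ K2 → k ∈ K := fun k hk => hK ▸ Or.inr hk
  rcases hi with hi | hi <;> rcases hj with hj | hj
  · obtain ⟨p, hp⟩ := hK1' i hi j hj
    exact ⟨p, fun k hk => hsubK1 k (hp k hk)⟩
  · obtain ⟨p1, hp1⟩ := hK1' i hi R1 hR1
    obtain ⟨p2, hp2⟩ := hK2' R2 hR2 j hj
    refine ⟨p1.append (Walk.cons hfG' p2), ?_⟩
    intro k hk
    rcases (Walk.mem_support_append_iff _ _).mp hk with hk | hk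
    · exact hsubK1 k (hp1 k hk)
    · rw [Walk.support_cons] at hk
      rcases List.mem_cons.mp hk with rfl | hk
      · exact hsubK1 _ hR1
      · exact hsubK2 k (hp2 k hk)
  · obtain ⟨p1, hp1⟩ := hK2' i hi R2 hR2
    obtain ⟨p2, hp2⟩ := hK1' R1 hR1 j hj
    refine ⟨p1.append (Walk.cons hfG'.symm p2), ?_⟩
    intro k hk
    rcases (Walk.mem_support_append_iff _ _).mp hk with hk | hk
    · exact hsubK2 k (hp1 k hk)
    · rw [Walk.support_cons] at hk
      rcases List.mem_cons.mp hk with rfl | hk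
      · exact hsubK2 _ hR2
      · exact hsubK1 k (hp2 k hk)
  · obtain ⟨p, hp⟩ := hK2' i hi j hj
    exact ⟨p, fun k hk => hsubK2 k (hp k hk)⟩
end

section
/- Let T be a join tree of an acyclic join J without a general break with respect to the subjoin J_S, and suppose a single change (adding one tree edge e' and deleting one tree edge e on the cycle created by e') produces another join tree T'. If T' has a general break with respect to two maximal subtrees T1, T2 of J_S, then either e joins two subjoin nodes (so T' has strictly more maximal subtrees than T), or e itself constitutes a general break point in T with respect to T1 and T2, contradicting the assumption. Hence from a join tree without a general break, no single change produces a join tree that has a general break while keeping the number of maximal subtrees of J_S the same or smaller. -/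
/-- `C` is a maximal subtree of the subjoin node set `K` in the tree `G`. -/
def MaxSubG {ι : Type} (G : SimpleGraph ι) (K C : Set ι) : Prop :=
  C.Nonempty ∧ C ⊆ K ∧ ConnectedIn G C ∧
    ∀ C', C ⊆ C' → C' ⊆ K → ConnectedIn G C' → C' = C

/-- There is a general break in `G` with respect to the subjoin `K`: a path `w`
between nodes of two different maximal subtrees of `K` whose internal nodes are
non-subjoin nodes, containing two adjacent nodes that share no attribute outside the
set `S` of attributes occurring in every node of `w`. -/
def GenBreak {ι α : Type} (G : SimpleGraph ι) (sch : ι → Set α) (K : Set ι) : Prop :=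
  ∃ (i j : ι) (w : G.Walk i j), w.IsPath ∧ i ∈ K ∧ j ∈ K ∧
    (¬ ∃ p : G.Walk i j, ∀ k ∈ p.support, k ∈ K) ∧
    (∀ x ∈ w.support, x ≠ i → x ≠ j → x ∉ K) ∧
    ∃ u u', G.Adj u u' ∧ u ∈ w.support ∧ u' ∈ w.support ∧
      (sch u \ ⋂ x ∈ w.support, sch x) ∩ (sch u' \ ⋂ x ∈ w.support, sch x) = ∅

section JTAux

open SimpleGraph Walk

variable {ι α : Type} {G : SimpleGraph ι} {sch : ι → Set α} {K : Set ι}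

/-- In an acyclic graph, any two paths with the same endpoints are equal. -/
lemma jt_luniq (hac : G.IsAcyclic) {v w : ι} {p q : G.Walk v w}
    (hp : p.IsPath) (hq : q.IsPath) : p = q := by
  have := hac.path_unique ⟨p, hp⟩ ⟨q, hq⟩
  exact congrArg Subtype.val this

/-- In a join tree, an attribute shared by the endpoints of a path occurs everywhere
on the path. -/
lemma jt_lcover (hJT : IsJoinTree G sch) {a : α} {v w : ι}
    (p : G.Walk v w) (hp : p.IsPath) (hv : a ∈ sch v) (hw : a ∈ sch w) :
    ∀ z ∈ p.support, a ∈ sch z := by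
  classical
  obtain ⟨W, hW⟩ := hJT.2 a v w hv hw
  have hpe : p = W.bypass := jt_luniq hJT.1.2 hp W.bypass_isPath
  intro z hz
  exact hW z (W.support_bypass_subset (hpe ▸ hz))

/-- In an acyclic graph, an edge between two vertices of a path is an edge of the path. -/
lemma jt_lchord (hac : G.IsAcyclic) {i j u u' : ι} {p : G.Walk i j}
    (hp : p.IsPath) (hu : u ∈ p.support) (hu' : u' ∈ p.support)
    (hadj : G.Adj u u') : s(u, u') ∈ p.edges := by
  classical
  by_cases hcase : u ∈ (p.takeUntil u' hu').support
  · set q := (p.takeUntil u' hu').dropUntil u hcase with hqdef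
    have hq : q.IsPath := (hp.takeUntil hu').dropUntil hcase
    by_cases hin : s(u, u') ∈ q.edges
    · exact (p.edges_takeUntil_subset hu') ((edges_dropUntil_subset _ hcase) hin)
    · exfalso
      have hcyc : (Walk.cons hadj.symm q).IsCycle := by
        refine SimpleGraph.Path.cons_isCycle ⟨q, hq⟩ hadj.symm ?_
        rw [Sym2.eq_swap]
        exact hin
      exact hac _ hcyc
  · have hu2 : u ∈ (p.dropUntil u' hu').support := by
      have := p.take_spec hu'
      rw [← this] at hu
      rcases (mem_support_append_iff _ _).mp hu with h | h
      · exact absurd h hcase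
      · exact h
    set q := (p.dropUntil u' hu').takeUntil u hu2 with hqdef
    have hq : q.IsPath := (hp.dropUntil hu').takeUntil hu2
    by_cases hin : s(u', u) ∈ q.edges
    · have : s(u', u) ∈ p.edges :=
        (p.edges_dropUntil_subset hu') ((edges_takeUntil_subset _ hu2) hin)
      simpa [Sym2.eq_swap] using this
    · exfalso
      have hcyc : (Walk.cons hadj q).IsCycle := by
        refine SimpleGraph.Path.cons_isCycle ⟨q, hq⟩ hadj ?_
        rw [Sym2.eq_swap]
        exact hin
      exact hac _ hcyc

/-- Splitting a walk at an edge. -/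
lemma jt_lsplitedge {i j : ι} (p : G.Walk i j) {ee : Sym2 ι} (hee : ee ∈ p.edges) :
    ∃ (x y : ι) (h : G.Adj x y) (w1 : G.Walk i x) (w2 : G.Walk y j),
      ee = s(x, y) ∧ p = w1.append (Walk.cons h w2) := by
  induction p with
  | nil => simp at hee
  | @cons a b c hadj q ih =>
    rw [Walk.edges_cons, List.mem_cons] at hee
    rcases hee with hee | hee
    · exact ⟨a, b, hadj, Walk.nil, q, hee, rfl⟩
    · obtain ⟨x, y, h', w1, w2, heq, hpeq⟩ := ih hee
      exact ⟨x, y, h', Walk.cons hadj w1, w2, heq, by rw [hpeq]; rfl⟩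

/-- Find the first `K`-vertex along a walk ending in `K`. -/
lemma jt_lfirst {s t : ι} (w : G.Walk s t) (ht : t ∈ K) :
    ∃ (i0 : ι) (w1 : G.Walk s i0) (w2 : G.Walk i0 t), i0 ∈ K ∧
      w = w1.append w2 ∧ ∀ z ∈ w1.support, z ≠ i0 → z ∉ K := by
  classical
  induction w with
  | nil =>
    exact ⟨_, Walk.nil, Walk.nil, ht, rfl, by simp⟩
  | @cons a b c hadj q ih =>
    by_cases hv : a ∈ K
    · refine ⟨a, Walk.nil, Walk.cons hadj q, hv, rfl, by simp⟩
    · obtain ⟨i0, w1, w2, hi0, heq, hno⟩ := ih ht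
      refine ⟨i0, Walk.cons hadj w1, w2, hi0, by rw [heq]; rfl, ?_⟩
      intro z hz hzi
      rw [Walk.support_cons, List.mem_cons] at hz
      rcases hz with rfl | hz
      · exact hv
      · exact hno z hz hzi

/-- Find the last `K`-vertex along a walk starting in `K`. -/
lemma jt_llast {s t : ι} (w : G.Walk s t) (hs : s ∈ K) :
    ∃ (i0 : ι) (w1 : G.Walk s i0) (w2 : G.Walk i0 t), i0 ∈ K ∧
      w = w1.append w2 ∧ ∀ z ∈ w2.support, z ≠ i0 → z ∉ K := by
  obtain ⟨i0, v1, v2, hi0, heq, hno⟩ := jt_lfirst (K := K) w.reverse hs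
  refine ⟨i0, v2.reverse, v1.reverse, hi0, ?_, ?_⟩
  · have := congrArg Walk.reverse heq
    rw [Walk.reverse_reverse, Walk.reverse_append] at this
    exact this
  · intro z hz hzi
    rw [Walk.support_reverse, List.mem_reverse] at hz
    exact hno z hz hzi

/-- MAIN: in a tree without a general break, if a path between two `K`-nodes is split
at an edge `(u,u')` with not both endpoints in `K`, then `u` and `u'` share an
attribute missing somewhere on the path. -/
lemma jt_main (hJT : IsJoinTree G sch) (hnb : ¬ GenBreak G sch K)
    {i j u u' : ι} (h : G.Adj u u') (X1 : G.Walk i u) (X2 : G.Walk u' j)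
    (hP : (X1.append (Walk.cons h X2)).IsPath)
    (hiK : i ∈ K) (hjK : j ∈ K) (hnK : ¬(u ∈ K ∧ u' ∈ K)) :
    ∃ β, β ∈ sch u ∧ β ∈ sch u' ∧
      ∃ z0, (z0 ∈ X1.support ∨ z0 ∈ X2.support) ∧ β ∉ sch z0 := by
  classical
  obtain ⟨i1, Y1, Y2, hi1K, hX1eq, hY2no⟩ := jt_llast (K := K) X1 hiK
  obtain ⟨j1, W1, W2, hj1K, hX2eq, hW1no⟩ := jt_lfirst (K := K) X2 hjK
  set Z : G.Walk i1 j1 := Y2.append (Walk.cons h W1) with hZdef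
  have hZsup : Z.support = Y2.support ++ W1.support := by
    rw [hZdef, Walk.support_append, Walk.support_cons, List.tail_cons]
  -- path facts
  have hX1path : X1.IsPath := hP.of_append_left
  have hconsX2 : (Walk.cons h X2).IsPath := hP.of_append_right
  have hX2path : X2.IsPath := hconsX2.of_cons
  have hY2path : Y2.IsPath := by
    rw [hX1eq] at hX1path; exact hX1path.of_append_right
  have hW1path : W1.IsPath := by
    rw [hX2eq] at hX2path; exact hX2path.of_append_left
  have hPs : (X1.support ++ X2.support).Nodup := by
    have := (Walk.isPath_def _).mp hP
    rwa [Walk.support_append, Walk.support_cons, List.tail_cons] at this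
  have hdisj : List.Disjoint X1.support X2.support := (List.nodup_append'.mp hPs).2.2
  have hY2sub : ∀ z ∈ Y2.support, z ∈ X1.support := by
    intro z hz
    rw [hX1eq]
    exact (Walk.mem_support_append_iff _ _).mpr (Or.inr hz)
  have hW1sub : ∀ z ∈ W1.support, z ∈ X2.support := by
    intro z hz
    rw [hX2eq]
    exact (Walk.mem_support_append_iff _ _).mpr (Or.inl hz)
  have hZpath : Z.IsPath := by
    rw [Walk.isPath_def, hZsup]
    refine List.Nodup.append ((Walk.isPath_def _).mp hY2path)
      ((Walk.isPath_def _).mp hW1path) ?_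
    intro z hz1 hz2
    exact hdisj (hY2sub z hz1) (hW1sub z hz2)
  have huZ : u ∈ Z.support :=
    (Walk.mem_support_append_iff _ _).mpr (Or.inl Y2.end_mem_support)
  have hu'Z : u' ∈ Z.support :=
    (Walk.mem_support_append_iff _ _).mpr (Or.inr (by
      rw [Walk.support_cons]; exact List.mem_cons_of_mem _ W1.start_mem_support))
  have hnkp : ¬ ∃ p : G.Walk i1 j1, ∀ k ∈ p.support, k ∈ K := by
    rintro ⟨p, hpK⟩
    have hb : p.bypass = Z := jt_luniq hJT.1.2 p.bypass_isPath hZpath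
    have hsubK : ∀ z ∈ Z.support, z ∈ K := by
      intro z hz
      exact hpK z (p.support_bypass_subset (hb ▸ hz))
    exact hnK ⟨hsubK u huZ, hsubK u' hu'Z⟩
  have hint : ∀ z ∈ Z.support, z ≠ i1 → z ≠ j1 → z ∉ K := by
    intro z hz hzi hzj
    rw [hZsup, List.mem_append] at hz
    rcases hz with hz | hz
    · exact hY2no z hz hzi
    · exact hW1no z hz hzj
  have hne : ((sch u \ ⋂ x ∈ Z.support, sch x) ∩
      (sch u' \ ⋂ x ∈ Z.support, sch x)).Nonempty := by
    rw [Set.nonempty_iff_ne_empty]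
    intro heq
    exact hnb ⟨i1, j1, Z, hZpath, hi1K, hj1K, hnkp, hint, u, u', h, huZ, hu'Z, heq⟩
  obtain ⟨β, hβ1, hβ2⟩ := hne
  refine ⟨β, hβ1.1, hβ2.1, ?_⟩
  have : ¬ β ∈ ⋂ x ∈ Z.support, sch x := hβ1.2
  rw [Set.mem_iInter₂] at this
  push_neg at this
  obtain ⟨z0, hz0Z, hz0β⟩ := this
  rw [hZsup, List.mem_append] at hz0Z
  rcases hz0Z with hz | hz
  · exact ⟨z0, Or.inl (hY2sub z0 hz), hz0β⟩
  · exact ⟨z0, Or.inr (hW1sub z0 hz), hz0β⟩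

/-- The `K`-component of `x`. -/
def jtCC (G : SimpleGraph ι) (K : Set ι) (x : ι) : Set ι :=
  {y | y ∈ K ∧ ∃ p : G.Walk x y, ∀ z ∈ p.support, z ∈ K}

lemma jtCC_self (hx : x ∈ K) : x ∈ jtCC G K x := by
  refine ⟨hx, Walk.nil, ?_⟩
  intro z hz
  rw [Walk.support_nil, List.mem_singleton] at hz
  subst hz
  exact hx

lemma jtCC_mem_of_support {x y : ι} (p : G.Walk x y) (hK : ∀ z ∈ p.support, z ∈ K) :
    ∀ z ∈ p.support, z ∈ jtCC G K x := by
  classical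
  intro z hz
  exact ⟨hK z hz, p.takeUntil z hz, fun w hw => hK w (p.support_takeUntil_subset hz hw)⟩

lemma jtCC_symm {x y : ι} (hy : y ∈ jtCC G K x) : x ∈ jtCC G K y := by
  obtain ⟨hyK, p, hp⟩ := hy
  exact ⟨hp x p.start_mem_support, p.reverse, by
    intro z hz; rw [Walk.support_reverse, List.mem_reverse] at hz; exact hp z hz⟩

lemma jtCC_eq_of_mem {x y : ι} (hy : y ∈ jtCC G K x) : jtCC G K x = jtCC G K y := by
  obtain ⟨hyK, p, hp⟩ := hy
  ext z
  constructor
  · rintro ⟨hzK, q, hq⟩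
    refine ⟨hzK, p.reverse.append q, ?_⟩
    intro w hw
    rcases (Walk.mem_support_append_iff _ _).mp hw with hw | hw
    · rw [Walk.support_reverse, List.mem_reverse] at hw; exact hp w hw
    · exact hq w hw
  · rintro ⟨hzK, q, hq⟩
    refine ⟨hzK, p.append q, ?_⟩
    intro w hw
    rcases (Walk.mem_support_append_iff _ _).mp hw with hw | hw
    · exact hp w hw
    · exact hq w hw

lemma jtCC_maxsub (hx : x ∈ K) : MaxSubG G K (jtCC G K x) := by
  refine ⟨⟨x, jtCC_self hx⟩, fun y hy => hy.1, ?_, ?_⟩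
  · intro i hi j hj
    obtain ⟨hiK, p, hp⟩ := hi
    obtain ⟨hjK, q, hq⟩ := hj
    refine ⟨p.reverse.append q, ?_⟩
    intro z hz
    rcases (Walk.mem_support_append_iff _ _).mp hz with hz | hz
    · rw [Walk.support_reverse, List.mem_reverse] at hz
      exact jtCC_mem_of_support p hp z hz
    · exact jtCC_mem_of_support q hq z hz
  · intro C' hsub hsubK hconn
    apply Set.Subset.antisymm _ hsub
    intro z hz
    obtain ⟨p, hp⟩ := hconn x (hsub (jtCC_self hx)) z hz
    exact ⟨hsubK hz, p, fun w hw => hsubK (hp w hw)⟩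

lemma maxsub_eq_jtCC (hC : MaxSubG G K C) {x : ι} (hx : x ∈ C) : C = jtCC G K x := by
  obtain ⟨hne, hsubK, hconn, hmax⟩ := hC
  have h1 : C ⊆ jtCC G K x := by
    intro y hy
    obtain ⟨p, hp⟩ := hconn x hx y hy
    exact ⟨hsubK hy, p, fun w hw => hsubK (hp w hw)⟩
  have h2 := hmax (jtCC G K x) h1 (fun y hy => hy.1) (jtCC_maxsub (hsubK hx)).2.2.1
  exact h2.symm

/-- Transfer a walk within `K` along an edge-inclusion on `K`. -/
lemma jt_walk_map {G G' : SimpleGraph ι}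
    (hedge : ∀ x y, G'.Adj x y → x ∈ K → y ∈ K → G.Adj x y)
    {x y : ι} (p : G'.Walk x y) (hp : ∀ z ∈ p.support, z ∈ K) :
    ∃ q : G.Walk x y, q.support = p.support := by
  induction p with
  | nil => exact ⟨Walk.nil, rfl⟩
  | @cons a b c hadj q ih =>
    have haK : a ∈ K := hp a (by simp)
    have hbK : b ∈ K := hp b (by rw [Walk.support_cons]; exact List.mem_cons_of_mem _ q.start_mem_support)
    obtain ⟨q', hq'⟩ := ih (fun z hz => hp z (by rw [Walk.support_cons]; exact List.mem_cons_of_mem _ hz))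
    exact ⟨Walk.cons (hedge a b hadj haK hbK) q', by rw [Walk.support_cons, Walk.support_cons, hq']⟩

/-- Counting: splitting a `K`-component strictly increases the number of maximal
subtrees. -/
lemma jt_count {ι : Type} [Fintype ι] (G G' : SimpleGraph ι) (K : Set ι) {a b : ι}
    (haK : a ∈ K) (hbK : b ∈ K)
    (hedge : ∀ x y, G'.Adj x y → x ∈ K → y ∈ K → G.Adj x y)
    (hab : ∃ q : G.Walk a b, ∀ z ∈ q.support, z ∈ K)
    (hab' : ¬ ∃ q : G'.Walk a b, ∀ z ∈ q.support, z ∈ K) :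
    {C : Set ι | MaxSubG G K C}.ncard < {C : Set ι | MaxSubG G' K C}.ncard := by
  classical
  have hCC' : ∀ z ∈ K, jtCC G' K z ⊆ jtCC G K z := by
    rintro z hz y ⟨hyK, p, hp⟩
    obtain ⟨q, hq⟩ := jt_walk_map hedge p hp
    exact ⟨hyK, q, fun w hw => hp w (hq ▸ hw)⟩
  set pick : Set ι → ι := fun C =>
    if a ∈ C then a else (if h : (C ∩ K).Nonempty then h.some else a) with hpick
  have hpickmem : ∀ C, MaxSubG G K C → pick C ∈ C ∩ K := by
    intro C hC
    rw [hpick]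
    by_cases ha : a ∈ C
    · simp only [ha, if_true]; exact ⟨ha, hC.2.1 ha⟩
    · have hne : (C ∩ K).Nonempty := by
        obtain ⟨w, hw⟩ := hC.1
        exact ⟨w, hw, hC.2.1 hw⟩
      simp only [ha, if_false, dif_pos hne]
      exact hne.some_mem
  set f : Set ι → Set ι := fun C => jtCC G' K (pick C) with hf
  have hmaps : ∀ C ∈ {C : Set ι | MaxSubG G K C},
      f C ∈ {C : Set ι | MaxSubG G' K C} \ {jtCC G' K b} := by
    intro C hC
    refine ⟨jtCC_maxsub (hpickmem C hC).2, ?_⟩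
    simp only [Set.mem_singleton_iff]
    rw [hf]
    simp only
    intro heq
    have hbC : b ∈ C := by
      have : b ∈ jtCC G' K (pick C) := heq ▸ jtCC_self hbK
      have : b ∈ jtCC G K (pick C) := hCC' _ (hpickmem C hC).2 this
      have hCeq : C = jtCC G K (pick C) := maxsub_eq_jtCC hC (hpickmem C hC).1
      rw [hCeq]; exact this
    have haC : a ∈ C := by
      have hCeq : C = jtCC G K b := maxsub_eq_jtCC hC hbC
      rw [hCeq]
      obtain ⟨q, hq⟩ := hab
      exact jtCC_symm ⟨hbK, q, hq⟩
    have hpa : pick C = a := by rw [hpick]; simp [haC]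
    rw [hpa] at heq
    have hb2 : b ∈ jtCC G' K a := heq ▸ jtCC_self hbK
    exact hab' hb2.2
  have hinj : Set.InjOn f {C : Set ι | MaxSubG G K C} := by
    intro C1 h1 C2 h2 heq
    rw [hf] at heq
    simp only at heq
    have hz2 : pick C2 ∈ jtCC G' K (pick C1) := heq ▸ jtCC_self (hpickmem C2 h2).2
    have hz2' : pick C2 ∈ jtCC G K (pick C1) := hCC' _ (hpickmem C1 h1).2 hz2
    have e1 : C1 = jtCC G K (pick C1) := maxsub_eq_jtCC h1 (hpickmem C1 h1).1
    have e2 : C2 = jtCC G K (pick C2) := maxsub_eq_jtCC h2 (hpickmem C2 h2).1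
    rw [e1, e2, jtCC_eq_of_mem hz2']
  have hle := Set.ncard_le_ncard_of_injOn f hmaps hinj (Set.toFinite _)
  have hlt : ({C : Set ι | MaxSubG G' K C} \ {jtCC G' K b}).ncard
      < {C : Set ι | MaxSubG G' K C}.ncard := by
    exact Set.ncard_diff_singleton_lt_of_mem (jtCC_maxsub hbK) (Set.toFinite _)
  exact lt_of_le_of_lt hle hlt

end JTAux

open SimpleGraph Walk

/-- From a join tree without a general break, no single change (deleting one tree
edge `e` and adding one non-tree edge `e'` so that the result is again a join tree)
produces a join tree having a general break while keeping the number of maximal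
subtrees of the subjoin the same or smaller. -/
theorem stmt15 {ι α : Type} [Fintype ι]
    (G : SimpleGraph ι) (sch : ι → Set α) (K : Set ι)
    (hJT : IsJoinTree G sch) (hnb : ¬ GenBreak G sch K)
    (e e' : Sym2 ι) (he : e ∈ G.edgeSet) (he' : e' ∉ G.edgeSet)
    (hJT' : IsJoinTree (SimpleGraph.fromEdgeSet ((G.edgeSet \ {e}) ∪ {e'})) sch)
    (hcard :
      {C : Set ι | MaxSubG (SimpleGraph.fromEdgeSet ((G.edgeSet \ {e}) ∪ {e'})) K C}.ncard
        ≤ {C : Set ι | MaxSubG G K C}.ncard) :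
    ¬ GenBreak (SimpleGraph.fromEdgeSet ((G.edgeSet \ {e}) ∪ {e'})) sch K := by
  classical
  obtain ⟨⟨a0, b0⟩, rfl⟩ := Quot.exists_rep e
  set G' := SimpleGraph.fromEdgeSet ((G.edgeSet \ {s(a0, b0)}) ∪ {e'}) with hG'def
  intro hbrk
  obtain ⟨i, j, w', hw'path, hiK, hjK, hnkp', hint', u, u', hadj', huw, hu'w, hbreq⟩ := hbrk
  have hadj0 : G.Adj a0 b0 := (G.mem_edgeSet).mp he
  have hPsing : (Walk.cons hadj0 (Walk.nil : G.Walk b0 b0)).IsPath :=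
    (SimpleGraph.Path.singleton hadj0).2
  have hac : G.IsAcyclic := hJT.1.2
  have hac' : G'.IsAcyclic := hJT'.1.2
  have hed' : ¬ e'.IsDiag := by
    intro hd
    have hEd : G'.edgeSet = G.edgeSet \ {s(a0, b0)} := by
      rw [hG'def, SimpleGraph.edgeSet_fromEdgeSet]
      ext f
      simp only [Set.mem_diff, Set.mem_union, Set.mem_singleton_iff, Set.mem_setOf_eq]
      constructor
      · rintro ⟨⟨hfE, hfe⟩ | rfl, hnd⟩
        · exact ⟨hfE, hfe⟩
        · exact absurd hd hnd
      · rintro ⟨hfE, hfe⟩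
        exact ⟨Or.inl ⟨hfE, hfe⟩, G.not_isDiag_of_mem_edgeSet hfE⟩
    obtain ⟨p⟩ := hJT'.1.1.preconnected a0 b0
    have hpe : ∀ f ∈ p.bypass.edges, f ∈ G.edgeSet := by
      intro f hf
      have hh := p.bypass.edges_subset_edgeSet hf
      rw [hEd] at hh
      exact hh.1
    have hq := jt_luniq hac (Walk.IsPath.transfer hpe p.bypass_isPath) hPsing
    have hmem : s(a0, b0) ∈ (p.bypass.transfer G hpe).edges := by rw [hq]; simp
    rw [Walk.edges_transfer] at hmem
    have hmem2 := p.bypass.edges_subset_edgeSet hmem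
    rw [hEd] at hmem2
    exact hmem2.2 rfl
  have hE' : G'.edgeSet = (G.edgeSet \ {s(a0, b0)}) ∪ {e'} := by
    rw [hG'def, SimpleGraph.edgeSet_fromEdgeSet]
    ext f
    simp only [Set.mem_diff, Set.mem_union, Set.mem_singleton_iff, Set.mem_setOf_eq]
    constructor
    · rintro ⟨h1, _⟩; exact h1
    · rintro (⟨hfE, hfe⟩ | rfl)
      · exact ⟨Or.inl ⟨hfE, hfe⟩, G.not_isDiag_of_mem_edgeSet hfE⟩
      · exact ⟨Or.inr rfl, hed'⟩
  have heG' : s(a0, b0) ∉ G'.edgeSet := by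
    rw [hE']
    intro hmem
    rcases hmem with h1 | h2
    · exact h1.2 rfl
    · rw [Set.mem_singleton_iff] at h2
      exact he' (h2 ▸ he)
  have hGsub : ∀ f ∈ G.edgeSet, f ≠ s(a0, b0) → f ∈ G'.edgeSet := by
    intro f hf hne
    rw [hE']; exact Or.inl ⟨hf, hne⟩
  have hG'sub : ∀ f ∈ G'.edgeSet, f ≠ e' → f ∈ G.edgeSet ∧ f ≠ s(a0, b0) := by
    intro f hf hne
    rw [hE'] at hf
    rcases hf with h1 | h2
    · exact h1
    · rw [Set.mem_singleton_iff] at h2; exact absurd h2 hne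
  have hiw : i ∈ w'.support := w'.start_mem_support
  have hjw : j ∈ w'.support := w'.end_mem_support
  have hsub' : ∀ β, β ∈ sch u → β ∈ sch u' → β ∈ ⋂ z ∈ w'.support, sch z := by
    intro β h1 h2
    by_contra hn
    have hmem : β ∈ (sch u \ ⋂ z ∈ w'.support, sch z) ∩
        (sch u' \ ⋂ z ∈ w'.support, sch z) := ⟨⟨h1, hn⟩, ⟨h2, hn⟩⟩
    rw [hbreq] at hmem
    exact hmem
  have hchord' : s(u, u') ∈ w'.edges := jt_lchord hac' hw'path huw hu'w hadj'
  have hpairK : ∀ p q : ι, G'.Adj p q → p ∈ w'.support → q ∈ w'.support →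
      ¬(p ∈ K ∧ q ∈ K) := by
    rintro p q hpq hpw hqw ⟨hpK, hqK⟩
    have hp2 : p = i ∨ p = j := by
      by_contra hc; push_neg at hc
      exact hint' p hpw hc.1 hc.2 hpK
    have hq2 : q = i ∨ q = j := by
      by_contra hc; push_neg at hc
      exact hint' q hqw hc.1 hc.2 hqK
    rcases hp2 with rfl | rfl <;> rcases hq2 with rfl | rfl
    · exact hpq.ne rfl
    · refine hnkp' ⟨Walk.cons hpq Walk.nil, ?_⟩
      intro z hz
      simp only [Walk.support_cons, Walk.support_nil, List.mem_cons,
        List.mem_singleton, List.not_mem_nil, or_false] at hz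
      rcases hz with rfl | rfl
      · exact hpK
      · exact hqK
    · refine hnkp' ⟨Walk.cons hpq.symm Walk.nil, ?_⟩
      intro z hz
      simp only [Walk.support_cons, Walk.support_nil, List.mem_cons,
        List.mem_singleton, List.not_mem_nil, or_false] at hz
      rcases hz with rfl | rfl
      · exact hqK
      · exact hpK
    · exact hpq.ne rfl
  by_cases hcaseA : e' ∈ w'.edges
  · -- case B : the new edge is used by the break path
    obtain ⟨x, y, hxyadj, w1, w2, he'eq, hw'eq⟩ := jt_lsplitedge w' hcaseA
    have hxw : x ∈ w'.support := w'.fst_mem_support_of_mem_edges (he'eq ▸ hcaseA)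
    have hyw : y ∈ w'.support := w'.snd_mem_support_of_mem_edges (he'eq ▸ hcaseA)
    have hxyK : ¬ (x ∈ K ∧ y ∈ K) := hpairK x y hxyadj hxw hyw
    have hbothK : ¬ (u ∈ K ∧ u' ∈ K) := hpairK u u' hadj' huw hu'w
    obtain ⟨p0⟩ := hJT.1.1.preconnected i j
    set P := p0.bypass with hPdef
    have hPpath : P.IsPath := p0.bypass_isPath
    have heP : s(a0, b0) ∈ P.edges := by
      by_contra hne
      have hPG' : ∀ f ∈ P.edges, f ∈ G'.edgeSet := fun f hf =>
        hGsub f (P.edges_subset_edgeSet hf) (fun h => hne (h ▸ hf))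
      have hPw' := jt_luniq hac' (Walk.IsPath.transfer hPG' hPpath) hw'path
      have hmm : e' ∈ (P.transfer G' hPG').edges := by rw [hPw']; exact hcaseA
      rw [Walk.edges_transfer] at hmm
      exact he' (P.edges_subset_edgeSet hmm)
    obtain ⟨a, b, hab, P1, P2, heeq, hPeq⟩ := jt_lsplitedge P heP
    have habG' : s(a, b) ∉ G'.edgeSet := heeq ▸ heG'
    have habsing : (Walk.cons hab (Walk.nil : G.Walk b b)).IsPath :=
      (SimpleGraph.Path.singleton hab).2
    by_cases habK : a ∈ K ∧ b ∈ K
    · -- the deleted edge joins two subjoin nodes : counting argument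
      have hedge : ∀ p q : ι, G'.Adj p q → p ∈ K → q ∈ K → G.Adj p q := by
        intro p q hpq hpK hqK
        have hmem : s(p, q) ∈ G'.edgeSet := (G'.mem_edgeSet).mpr hpq
        by_cases hfe : s(p, q) = e'
        · exfalso
          rw [he'eq] at hfe
          rcases Sym2.eq_iff.mp hfe with ⟨rfl, rfl⟩ | ⟨rfl, rfl⟩
          · exact hxyK ⟨hpK, hqK⟩
          · exact hxyK ⟨hqK, hpK⟩
        · exact (G.mem_edgeSet).mp (hG'sub _ hmem hfe).1
      refine absurd hcard (not_le.mpr (jt_count G G' K habK.1 habK.2 hedge ?_ ?_))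
      · refine ⟨Walk.cons hab Walk.nil, ?_⟩
        intro z hz
        simp only [Walk.support_cons, Walk.support_nil, List.mem_cons,
          List.mem_singleton, List.not_mem_nil, or_false] at hz
        rcases hz with rfl | rfl
        · exact habK.1
        · exact habK.2
      · rintro ⟨q, hq⟩
        have hqb : ∀ z ∈ q.bypass.support, z ∈ K := fun z hz =>
          hq z (q.support_bypass_subset hz)
        have hqe : ∀ f ∈ q.bypass.edges, f ∈ G.edgeSet := by
          intro f hf
          have hfE := q.bypass.edges_subset_edgeSet hf
          by_cases hfe : f = e'
          · exfalso
            subst hfe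
            rw [he'eq] at hf
            have hx2 : x ∈ q.bypass.support := q.bypass.fst_mem_support_of_mem_edges hf
            have hy2 : y ∈ q.bypass.support := q.bypass.snd_mem_support_of_mem_edges hf
            exact hxyK ⟨hqb x hx2, hqb y hy2⟩
          · exact (hG'sub f hfE hfe).1
        have huq := jt_luniq hac (Walk.IsPath.transfer hqe q.bypass_isPath) habsing
        have hmm : s(a, b) ∈ (q.bypass.transfer G hqe).edges := by rw [huq]; simp
        rw [Walk.edges_transfer] at hmm
        exact habG' (q.bypass.edges_subset_edgeSet hmm)
    · -- the deleted edge is a general break point of the original tree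
      obtain ⟨α, hαa, hαb, z0, hz0mem, hαz0⟩ :=
        jt_main hJT hnb hab P1 P2 (by rw [← hPeq]; exact hPpath) hiK hjK habK
      have hw'ed : w'.edges = w1.edges ++ s(x, y) :: w2.edges := by
        rw [hw'eq, Walk.edges_append, Walk.edges_cons]
      have hw'nd := hw'path.isTrail.edges_nodup
      rw [hw'ed] at hw'nd
      have he'w1 : s(x, y) ∉ w1.edges := fun h =>
        (List.nodup_append'.mp hw'nd).2.2 h List.mem_cons_self
      have he'w2 : s(x, y) ∉ w2.edges := fun h =>
        (List.nodup_cons.mp (List.nodup_append.mp hw'nd).2.1).1 h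
      have hw1G : ∀ f ∈ w1.edges, f ∈ G.edgeSet := by
        intro f hf
        refine (hG'sub f (w1.edges_subset_edgeSet hf) ?_).1
        intro hfe
        subst hfe
        rw [he'eq] at hf
        exact he'w1 hf
      have hw2G : ∀ f ∈ w2.edges, f ∈ G.edgeSet := by
        intro f hf
        refine (hG'sub f (w2.edges_subset_edgeSet hf) ?_).1
        intro hfe
        subst hfe
        rw [he'eq] at hf
        exact he'w2 hf
      set w1G := w1.transfer G hw1G with hw1Gdef
      set w2G := w2.transfer G hw2G with hw2Gdef
      have hw1path : w1.IsPath := by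
        have hh := hw'path; rw [hw'eq] at hh; exact hh.of_append_left
      have hw2path : w2.IsPath := by
        have hh := hw'path; rw [hw'eq] at hh; exact (hh.of_append_right).of_cons
      have hP1path : P1.IsPath := by
        have hh := hPpath; rw [hPeq] at hh; exact hh.of_append_left
      have hP2path : P2.IsPath := by
        have hh := hPpath; rw [hPeq] at hh; exact (hh.of_append_right).of_cons
      have hPed : P.edges = P1.edges ++ s(a, b) :: P2.edges := by
        rw [hPeq, Walk.edges_append, Walk.edges_cons]
      have hPnd := hPpath.isTrail.edges_nodup
      rw [hPed] at hPnd
      have heP1 : s(a, b) ∉ P1.edges := fun h =>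
        (List.nodup_append'.mp hPnd).2.2 h List.mem_cons_self
      have heP2 : s(a, b) ∉ P2.edges := fun h =>
        (List.nodup_cons.mp (List.nodup_append.mp hPnd).2.1).1 h
      have hP1G' : ∀ f ∈ P1.edges, f ∈ G'.edgeSet := by
        intro f hf
        refine hGsub f (P1.edges_subset_edgeSet hf) ?_
        intro hfe
        rw [hfe, heeq] at hf
        exact heP1 hf
      have hP2G' : ∀ f ∈ P2.edges, f ∈ G'.edgeSet := by
        intro f hf
        refine hGsub f (P2.edges_subset_edgeSet hf) ?_
        intro hfe
        rw [hfe, heeq] at hf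
        exact heP2 hf
      set P1t := P1.transfer G' hP1G' with hP1tdef
      set P2t := P2.transfer G' hP2G' with hP2tdef
      set D0 : G'.Walk a b := (P1t.reverse.append w').append P2t.reverse with hD0def
      set D := D0.bypass with hDdef
      have hDpath : D.IsPath := D0.bypass_isPath
      have he'D : e' ∈ D.edges := by
        by_contra hne
        have hDG : ∀ f ∈ D.edges, f ∈ G.edgeSet := fun f hf =>
          (hG'sub f (D.edges_subset_edgeSet hf) (fun h => hne (h ▸ hf))).1
        have huD := jt_luniq hac (Walk.IsPath.transfer hDG hDpath) habsing
        have hmm : s(a, b) ∈ (D.transfer G hDG).edges := by rw [huD]; simp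
        rw [Walk.edges_transfer] at hmm
        exact habG' (D.edges_subset_edgeSet hmm)
      have hxD : x ∈ D.support := D.fst_mem_support_of_mem_edges (by rw [← he'eq]; exact he'D)
      have hyD : y ∈ D.support := D.snd_mem_support_of_mem_edges (by rw [← he'eq]; exact he'D)
      have hαD := jt_lcover hJT' D hDpath hαa hαb
      have hαx : α ∈ sch x := hαD x hxD
      have hαy : α ∈ sch y := hαD y hyD
      set pAX := (P1.reverse.append w1G).bypass with hAXdef
      have hAXpath : pAX.IsPath := (P1.reverse.append w1G).bypass_isPath
      have hαAX := jt_lcover hJT pAX hAXpath hαa hαx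
      set pBY := (P2.append w2G.reverse).bypass with hBYdef
      have hBYpath : pBY.IsPath := (P2.append w2G.reverse).bypass_isPath
      have hαBY := jt_lcover hJT pBY hBYpath hαb hαy
      have hz0w' : z0 ∈ w'.support := by
        rcases hz0mem with hz | hz
        · have hMe := jt_luniq hac (w1G.append pAX.reverse).bypass_isPath hP1path
          have hz2 := (w1G.append pAX.reverse).support_bypass_subset
            (by rw [hMe]; exact hz)
          rcases (Walk.mem_support_append_iff _ _).mp hz2 with hz3 | hz3
          · rw [hw1Gdef, Walk.support_transfer] at hz3
            rw [hw'eq]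
            exact (Walk.mem_support_append_iff _ _).mpr (Or.inl hz3)
          · exfalso
            rw [Walk.support_reverse, List.mem_reverse] at hz3
            exact hαz0 (hαAX z0 hz3)
        · have hMe := jt_luniq hac (pBY.append w2G).bypass_isPath hP2path
          have hz2 := (pBY.append w2G).support_bypass_subset
            (by rw [hMe]; exact hz)
          rcases (Walk.mem_support_append_iff _ _).mp hz2 with hz3 | hz3
          · exfalso; exact hαz0 (hαBY z0 hz3)
          · rw [hw2Gdef, Walk.support_transfer] at hz3
            rw [hw'eq]
            refine (Walk.mem_support_append_iff _ _).mpr (Or.inr ?_)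
            rw [Walk.support_cons]
            exact List.mem_cons_of_mem _ hz3
      have hαS' : α ∉ ⋂ z ∈ w'.support, sch z := by
        intro hS
        exact hαz0 (Set.mem_iInter₂.mp hS z0 hz0w')
      by_cases hPmem : s(u, u') ∈ P.edges
      · obtain ⟨u1, v1, h1, X1, X2, hueq, hPeq2⟩ := jt_lsplitedge P hPmem
        have hnK1 : ¬ (u1 ∈ K ∧ v1 ∈ K) := by
          rintro ⟨h1K, h2K⟩
          rcases Sym2.eq_iff.mp hueq with ⟨rfl, rfl⟩ | ⟨rfl, rfl⟩
          · exact hbothK ⟨h1K, h2K⟩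
          · exact hbothK ⟨h2K, h1K⟩
        obtain ⟨β, hβ1, hβ2, z1, hz1mem, hβz1⟩ :=
          jt_main hJT hnb h1 X1 X2 (by rw [← hPeq2]; exact hPpath) hiK hjK hnK1
        have hβuu' : β ∈ sch u ∧ β ∈ sch u' := by
          rcases Sym2.eq_iff.mp hueq with ⟨rfl, rfl⟩ | ⟨rfl, rfl⟩
          · exact ⟨hβ1, hβ2⟩
          · exact ⟨hβ2, hβ1⟩
        have hβS' := hsub' β hβuu'.1 hβuu'.2
        have hβi : β ∈ sch i := Set.mem_iInter₂.mp hβS' i hiw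
        have hβj : β ∈ sch j := Set.mem_iInter₂.mp hβS' j hjw
        have hz1P : z1 ∈ P.support := by
          rw [hPeq2]
          rcases hz1mem with hz | hz
          · exact (Walk.mem_support_append_iff _ _).mpr (Or.inl hz)
          · refine (Walk.mem_support_append_iff _ _).mpr (Or.inr ?_)
            rw [Walk.support_cons]
            exact List.mem_cons_of_mem _ hz
        exact hβz1 (jt_lcover hJT P hPpath hβi hβj z1 hz1P)
      · have huu'w : s(u, u') ∈ w1.edges ∨ s(u, u') = s(x, y) ∨ s(u, u') ∈ w2.edges := by
          have hh := hchord'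
          rw [hw'ed] at hh
          rcases List.mem_append.mp hh with h | h
          · exact Or.inl h
          · rcases List.mem_cons.mp h with h | h
            · exact Or.inr (Or.inl h)
            · exact Or.inr (Or.inr h)
        have hαu : α ∈ sch u ∧ α ∈ sch u' := by
          rcases huu'w with h | h | h
          · have hw1Gpath : w1G.IsPath := Walk.IsPath.transfer _ hw1path
            have hMe := jt_luniq hac (P1.append pAX).bypass_isPath hw1Gpath
            have hmemE : s(u, u') ∈ w1G.edges := by
              rw [hw1Gdef, Walk.edges_transfer]; exact h
            rw [← hMe] at hmemE
            have hmm := (P1.append pAX).edges_bypass_subset hmemE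
            rw [Walk.edges_append] at hmm
            rcases List.mem_append.mp hmm with h2 | h2
            · exact absurd h2 (fun hh =>
                hPmem (by rw [hPed]; exact List.mem_append.mpr (Or.inl hh)))
            · exact ⟨hαAX u (pAX.fst_mem_support_of_mem_edges h2),
                hαAX u' (pAX.snd_mem_support_of_mem_edges h2)⟩
          · rcases Sym2.eq_iff.mp h with ⟨rfl, rfl⟩ | ⟨rfl, rfl⟩
            · exact ⟨hαx, hαy⟩
            · exact ⟨hαy, hαx⟩
          · have hw2Gpath : w2G.IsPath := Walk.IsPath.transfer _ hw2path
            have hMe := jt_luniq hac (pBY.reverse.append P2).bypass_isPath hw2Gpath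
            have hmemE : s(u, u') ∈ w2G.edges := by
              rw [hw2Gdef, Walk.edges_transfer]; exact h
            rw [← hMe] at hmemE
            have hmm := (pBY.reverse.append P2).edges_bypass_subset hmemE
            rw [Walk.edges_append] at hmm
            rcases List.mem_append.mp hmm with h2 | h2
            · rw [Walk.edges_reverse, List.mem_reverse] at h2
              exact ⟨hαBY u (pBY.fst_mem_support_of_mem_edges h2),
                hαBY u' (pBY.snd_mem_support_of_mem_edges h2)⟩
            · exact absurd h2 (fun hh => hPmem (by
                rw [hPed]
                exact List.mem_append.mpr (Or.inr (List.mem_cons_of_mem _ hh))))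
        exact hαS' (hsub' α hαu.1 hαu.2)
  · -- case A : the new edge is not used by the break path
    have hGw' : ∀ f ∈ w'.edges, f ∈ G.edgeSet := by
      intro f hf
      exact (hG'sub f (w'.edges_subset_edgeSet hf) (fun h => hcaseA (h ▸ hf))).1
    by_cases hkpG : ∃ p : G.Walk i j, ∀ k ∈ p.support, k ∈ K
    · obtain ⟨p, hp⟩ := hkpG
      have hbp := jt_luniq hac p.bypass_isPath (Walk.IsPath.transfer hGw' hw'path)
      refine hnkp' ⟨w', ?_⟩
      intro z hz
      have hz' : z ∈ (w'.transfer G hGw').support := by rwa [Walk.support_transfer]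
      rw [← hbp] at hz'
      exact hp z (p.support_bypass_subset hz')
    · refine hnb ⟨i, j, w'.transfer G hGw', Walk.IsPath.transfer hGw' hw'path, hiK, hjK,
        hkpG, ?_, u, u', ?_, ?_, ?_, ?_⟩
      · intro z hz hz1 hz2
        rw [Walk.support_transfer] at hz
        exact hint' z hz hz1 hz2
      · exact (G.mem_edgeSet).mp (hGw' _ hchord')
      · rwa [Walk.support_transfer]
      · rwa [Walk.support_transfer]
      · simp only [Walk.support_transfer]
        exact hbreq
end
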